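/- arXiv:math/9811152 — 12 statements merged into one kernel-verified Lean document; each statement's English description precedes it below -/
import Mathlib

section
/- Let n, a, a', gH, b be integers with n even, n ≥ 1, a ≥ 5, a' ≥ 5, 2*(gH − 1) = n + 2*(a + a'), 2*b = n*(n − 5) − 10*(gH − 1) − 4, and b ≥ 0. Then n ≥ 18. -/
theorem stmt_1 (n a a' gH b : ℤ)
    (hn2 : Even n) (hn : n ≥ 1) (ha : a ≥ 5) (ha' : a' ≥ 5)
    (hgH : 2 * (gH - 1) = n + 2 * (a + a'))
    (hb : 2 * b = n * (n - 5) - 10 * (gH - 1) - 4)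
    (hb0 : b ≥ 0) :
    n ≥ 18 := by
  obtain ⟨k, hk⟩ := hn2
  subst hk
  by_contra h
  push_neg at h
  have hk8 : k ≤ 8 := by omega
  have hk1 : 1 ≤ k := by omega
  nlinarith [mul_nonneg (by linarith : (0:ℤ) ≤ 8 - k) (by linarith : (0:ℤ) ≤ 4 * k + 12)]
end

section
/- Let n, a, a', gH, b be integers with n even, n ≥ 1, a ≥ 4, a' ≥ 4, 2*(gH − 1) = n + 4*(a + a'), 2*b = n*(n − 5) − 10*(gH − 1) − 16, and b ≥ 0. Then n ≥ 20. -/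
theorem stmt_2 (n a a' gH b : ℤ)
    (hn2 : Even n) (hn : n ≥ 1) (ha : a ≥ 4) (ha' : a' ≥ 4)
    (hgH : 2 * (gH - 1) = n + 4 * (a + a'))
    (hb : 2 * b = n * (n - 5) - 10 * (gH - 1) - 16)
    (hb0 : b ≥ 0) :
    n ≥ 20 := by
  obtain ⟨k, hk⟩ := hn2
  subst hk
  by_contra h
  push_neg at h
  -- key inequality: n^2 - 10n ≥ 176
  nlinarith [sq_nonneg (k - 5), sq_nonneg k]
end

section
/- Let g, n, a, a', gH, b be integers with g ≥ 4, n even, n ≥ 1, a ≥ 5, a' ≥ 5, 2*(gH − 1) = n + 2*(g − 1)*(a + a'), 2*b = n*(n − 5) − 10*(gH − 1) − 4*(g − 1)^2, and b ≥ 0. Then n ≥ 2*g + 16. -/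
theorem stmt_3 (g n a a' gH b : ℤ)
    (hg : g ≥ 4) (hn2 : Even n) (hn : n ≥ 1) (ha : a ≥ 5) (ha' : a' ≥ 5)
    (hgH : 2 * (gH - 1) = n + 2 * (g - 1) * (a + a'))
    (hb : 2 * b = n * (n - 5) - 10 * (gH - 1) - 4 * (g - 1) ^ 2)
    (hb0 : b ≥ 0) :
    n ≥ 2 * g + 16 := by
  have key : n * n - 10 * n ≥ 10 * (g - 1) * (a + a') + 4 * (g - 1) ^ 2 := by nlinarith
  have hbig : n * n - 10 * n ≥ 100 * (g - 1) + 4 * (g - 1) ^ 2 := by nlinarith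
  by_contra h
  push_neg at h
  obtain ⟨k, hk⟩ := hn2
  have h14 : n ≤ 2 * g + 14 := by omega
  nlinarith [sq_nonneg (n - 5), sq_nonneg (2 * g + 14 - n)]
end

section
/- Let g, n, a, a', gH, b, gS be integers with g ≥ 2, n even, n ≥ 1, with a ≥ 4 and a' ≥ 4 when g = 3 and a ≥ 5 and a' ≥ 5 otherwise, satisfying 2*(gH − 1) = n + 2*(g − 1)*(a + a'), 2*b = n*(n − 5) − 10*(gH − 1) − 4*(g − 1)^2, b ≥ 0, and 2*gS = 2*n^2 − 17*n + 2 + 2*(n − 12)*(g − 1)*(a + a') − 14*(g − 1)^2. Then gS ≥ 225 if g = 2, gS ≥ 331 if g = 3, and gS ≥ 17*g^2 + 81*g + 74 if g ≥ 4. -/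
lemma key_ineq (m k : ℤ) (hm : m ≥ 3) (hk : k ≥ 1)
    (h : k^2 - 5*k - m^2 - 25*m ≥ 0) :
    (20*m+3)*k ≥ 20*m^2+135*m+171 := by
  nlinarith [sq_nonneg (k - m - 12), sq_nonneg (k - 12), mul_nonneg (sub_nonneg.2 hm) h, sq_nonneg (m-3), mul_nonneg (sub_nonneg.2 hm) (sub_nonneg.2 hm), h, sq_nonneg (k - 2*m - 6)]

theorem stmt_4 (g n a a' gH b gS : ℤ)
    (hg : g ≥ 2) (hn2 : Even n) (hn : n ≥ 1)
    (haa3 : g = 3 → a ≥ 4 ∧ a' ≥ 4)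
    (haa : g ≠ 3 → a ≥ 5 ∧ a' ≥ 5)
    (hgH : 2 * (gH - 1) = n + 2 * (g - 1) * (a + a'))
    (hb : 2 * b = n * (n - 5) - 10 * (gH - 1) - 4 * (g - 1) ^ 2)
    (hb0 : b ≥ 0)
    (hgS : 2 * gS = 2 * n ^ 2 - 17 * n + 2 + 2 * (n - 12) * (g - 1) * (a + a')
      - 14 * (g - 1) ^ 2) :
    (g = 2 → gS ≥ 225) ∧ (g = 3 → gS ≥ 331) ∧ (g ≥ 4 → gS ≥ 17 * g ^ 2 + 81 * g + 74) := by
  obtain ⟨k, hk⟩ := hn2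
  subst hk
  have hk1 : k ≥ 1 := by omega
  have hb2 : 2 * b = 4*k^2 - 20*k - 10*((g-1)*(a+a')) - 4*(g-1)^2 := by
    linear_combination hb - 5 * hgH
  refine ⟨?_, ?_, ?_⟩
  · rintro rfl
    obtain ⟨ha, ha'⟩ := haa (by norm_num)
    have hs : a + a' ≥ 10 := by linarith
    have hcon : 2*k^2 - 10*k - 5*(a+a') - 2 ≥ 0 := by linarith [hb2, hb0]
    have hk9 : k ≥ 9 := by
      by_contra h'
      push_neg at h'
      nlinarith [mul_nonneg (by linarith : (0:ℤ) ≤ k - 1) (by linarith : (0:ℤ) ≤ 8 - k)]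
    nlinarith [hgS, mul_nonneg (by linarith : (0:ℤ) ≤ a + a' - 10) (by linarith : (0:ℤ) ≤ 4*k - 24), mul_nonneg (by linarith : (0:ℤ) ≤ k - 9) (by linarith : (0:ℤ) ≤ 8*k + 78)]
  · rintro rfl
    obtain ⟨ha, ha'⟩ := haa3 rfl
    have hs : a + a' ≥ 8 := by linarith
    have hcon : 2*(k^2 - 5*k - 5*(a+a') - 4) ≥ 0 := by linarith [hb2, hb0]
    have hk10 : k ≥ 10 := by
      by_contra h'
      push_neg at h'
      nlinarith [mul_nonneg (by linarith : (0:ℤ) ≤ k - 1) (by linarith : (0:ℤ) ≤ 9 - k)]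
    nlinarith [hgS, mul_nonneg (by linarith : (0:ℤ) ≤ a + a' - 8) (by linarith : (0:ℤ) ≤ 8*k - 48), mul_nonneg (by linarith : (0:ℤ) ≤ k - 10) (by linarith : (0:ℤ) ≤ 8*k + 110)]
  · intro hg4
    obtain ⟨ha, ha'⟩ := haa (by omega)
    have hs : a + a' ≥ 10 := by linarith
    set m := g - 1 with hm
    have hm3 : m ≥ 3 := by omega
    have hcon : 2*(2*k^2 - 5*k) - 5*(m*(a+a')) - 2*m^2 ≥ 0 := by nlinarith [hb2, hb0]
    have h : k^2 - 5*k - m^2 - 25*m ≥ 0 := by nlinarith [mul_le_mul_of_nonneg_left hs (by linarith : (0:ℤ) ≤ m)]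
    have key := key_ineq m k hm3 hk1 h
    have hk12 : k ≥ 12 := by nlinarith [h, hm3, hk1]
    nlinarith [hgS, h, key, mul_nonneg (mul_nonneg (by linarith : (0:ℤ) ≤ a + a' - 10) (by linarith : (0:ℤ) ≤ k - 6)) (by linarith : (0:ℤ) ≤ m)]
end

section
/- There do not exist integers g, δ, n, a, a', gH, b such that: 2 ≤ g ≤ 13; δ equals 5, 4, 5, 5, 5, 6, 6, 6, 6, 7, 7, 7 according as g equals 2, 3, 4, 5, 6, 7, 8, 9, 10, 11, 12, 13 respectively; a ≥ δ and a' ≥ δ; n is even and n ≥ 1; 2*(gH − 1) = n + 2*(g − 1)*(a + a'); 2*b = n*(n − 5) − 10*(gH − 1) − 4*(g − 1)^2 with b ≥ 0; and (n − 5)*(n − 10) ≤ 14*(g − 1)^2. -/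
theorem stmt_5 :
    ¬ ∃ g δ n a a' gH b : ℤ,
      (2 ≤ g ∧ g ≤ 13) ∧
      ((g = 2 ∧ δ = 5) ∨ (g = 3 ∧ δ = 4) ∨ (g = 4 ∧ δ = 5) ∨ (g = 5 ∧ δ = 5) ∨
       (g = 6 ∧ δ = 5) ∨ (g = 7 ∧ δ = 6) ∨ (g = 8 ∧ δ = 6) ∨ (g = 9 ∧ δ = 6) ∨
       (g = 10 ∧ δ = 6) ∨ (g = 11 ∧ δ = 7) ∨ (g = 12 ∧ δ = 7) ∨ (g = 13 ∧ δ = 7)) ∧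
      a ≥ δ ∧ a' ≥ δ ∧ Even n ∧ n ≥ 1 ∧
      2 * (gH - 1) = n + 2 * (g - 1) * (a + a') ∧
      2 * b = n * (n - 5) - 10 * (gH - 1) - 4 * (g - 1) ^ 2 ∧ b ≥ 0 ∧
      (n - 5) * (n - 10) ≤ 14 * (g - 1) ^ 2 := by
  rintro ⟨g, δ, n, a, a', gH, b, ⟨hg1, hg2⟩, hgδ, ha, ha', hev, hn, h1, h2, hb, h3⟩
  rcases hgδ with ⟨hg, hδ⟩ | ⟨hg, hδ⟩ | ⟨hg, hδ⟩ | ⟨hg, hδ⟩ | ⟨hg, hδ⟩ | ⟨hg, hδ⟩ |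
    ⟨hg, hδ⟩ | ⟨hg, hδ⟩ | ⟨hg, hδ⟩ | ⟨hg, hδ⟩ | ⟨hg, hδ⟩ | ⟨hg, hδ⟩ <;>
    subst hg hδ <;> nlinarith [sq_nonneg (n - 30), sq_nonneg (n - 40), sq_nonneg (n - 50),
      sq_nonneg (n - 60), mul_nonneg hb hb]
end

section
/- There do not exist integers g, n, a, a' with g ≥ 2, a + a' ≥ g + 1, n*(n − 10) = 10*(g − 1)*(a + a') + 4*(g − 1)^2, and (n − 5)*(n − 10) ≤ 14*(g − 1)^2. -/
theorem stmt_6 :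
    ¬ ∃ g n a a' : ℤ,
      g ≥ 2 ∧ a + a' ≥ g + 1 ∧
      n * (n - 10) = 10 * (g - 1) * (a + a') + 4 * (g - 1) ^ 2 ∧
      (n - 5) * (n - 10) ≤ 14 * (g - 1) ^ 2 := by
  rintro ⟨g, n, a, a', hg, hs, heq, hle⟩
  have h1 : g - 1 ≥ 1 := by linarith
  have h2 : 5 * (n - 10) ≥ 20 * (g - 1) := by nlinarith
  have h3 : n - 10 ≥ 4 * (g - 1) := by linarith
  nlinarith [mul_le_mul h3 h3 (by linarith) (by linarith : (0:ℤ) ≤ n - 10)]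
end

section
/- There do not exist integers a, k, n with a ≥ 5, 2*|k| ≤ a − 3, n = 2*a^2 − 4*k^2, and n^2 − 10*n = 20*a + 4. -/
theorem stmt_8 :
    ¬ ∃ a k n : ℤ,
      a ≥ 5 ∧ 2 * |k| ≤ a - 3 ∧ n = 2 * a ^ 2 - 4 * k ^ 2 ∧
      n ^ 2 - 10 * n = 20 * a + 4 := by
  rintro ⟨a, k, n, ha, hk, hn, he⟩
  have h0 : (0:ℤ) ≤ 2 * |k| := by positivity
  have h1 : (2 * |k|) ^ 2 ≤ (a - 3) ^ 2 := by
    apply pow_le_pow_left₀ h0 hk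
  have h2 : 4 * k ^ 2 ≤ (a - 3) ^ 2 := by
    have := sq_abs k
    nlinarith
  nlinarith [sq_nonneg a, sq_nonneg (a - 3), sq_nonneg k, sq_nonneg (n - 10), sq_nonneg (a*a - 10)]
end

section
/- Let g, δ, a, k, n, gH, b be integers with g ≥ 3, δ ≥ 1, a ≥ δ, n = a^2 − g*k^2, n ≥ 1, 2*gH = n + 2 + (2*g − 3)*a − g*k, 2*b = n*(n − 5) − 10*(gH − 1) − 2*(g − 1)*(g − 3), and b ≥ 0. Then, as real numbers, (n − 5)^2 > 2*g^2 − 8*g + 31 + 5*δ*(2*g − Real.sqrt g − 3). -/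
theorem stmt_9 (g δ a k n gH b : ℤ)
    (hg : g ≥ 3) (hδ : δ ≥ 1) (ha : a ≥ δ)
    (hn : n = a ^ 2 - g * k ^ 2) (hn1 : n ≥ 1)
    (hgH : 2 * gH = n + 2 + (2 * g - 3) * a - g * k)
    (hb : 2 * b = n * (n - 5) - 10 * (gH - 1) - 2 * (g - 1) * (g - 3))
    (hb0 : b ≥ 0) :
    ((n : ℝ) - 5) ^ 2 >
      2 * (g : ℝ) ^ 2 - 8 * g + 31 + 5 * δ * (2 * g - Real.sqrt g - 3) := by
  have hgR : (3:ℝ) ≤ (g:ℝ) := by exact_mod_cast hg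
  set s := Real.sqrt g with hs
  have hg0 : (0:ℝ) < g := by linarith
  have hs0 : 0 < s := Real.sqrt_pos.mpr hg0
  have hs2 : s ^ 2 = g := Real.sq_sqrt (le_of_lt hg0)
  have hsg : s ≤ g := by nlinarith
  have haR : (1:ℝ) ≤ (a:ℝ) := by exact_mod_cast le_trans hδ ha
  have haδ : (δ:ℝ) ≤ (a:ℝ) := by exact_mod_cast ha
  have hδR : (1:ℝ) ≤ (δ:ℝ) := by exact_mod_cast hδ
  have hnR : (n:ℝ) = (a:ℝ)^2 - g * k^2 := by exact_mod_cast hn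
  have hn1R : (1:ℝ) ≤ (n:ℝ) := by exact_mod_cast hn1
  have hk2 : (s * |(k:ℝ)|) ^ 2 < (a:ℝ)^2 := by
    rw [mul_pow, hs2, sq_abs]; nlinarith
  have hk1 : s * |(k:ℝ)| < a := by
    refine lt_of_pow_lt_pow_left₀ 2 (by linarith) hk2
  have hgk : (g:ℝ) * k < s * a := by
    have h1 : (g:ℝ) * k ≤ g * |(k:ℝ)| := by
      have := le_abs_self (k:ℝ); nlinarith
    have h2 : (g:ℝ) * |(k:ℝ)| = s * (s * |(k:ℝ)|) := by rw [← mul_assoc]; nlinarith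
    nlinarith
  -- integer identity: (n-5)^2 = 2b + 5(2g-3)a - 5gk + 2g^2 - 8g + 31
  have hid : ((n:ℝ) - 5)^2 = 2*(b:ℝ) + 5*((2:ℝ)*g-3)*a - 5*g*k + 2*g^2 - 8*g + 31 := by
    have : ((n - 5)^2 : ℤ) = 2*b + 5*(2*g-3)*a - 5*g*k + 2*g^2 - 8*g + 31 := by ring_nf; nlinarith [hb, hgH]
    have := congrArg (fun x : ℤ => (x:ℝ)) this
    push_cast at this
    linarith [this]
  have hbR : (0:ℝ) ≤ (b:ℝ) := by exact_mod_cast hb0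
  rw [hid]
  nlinarith [mul_le_mul_of_nonneg_right (sub_nonneg.mpr hsg) (sub_nonneg.mpr haδ),
    mul_le_mul_of_nonneg_left hδR (le_of_lt hs0)]
end

section
/- Let a, k, n, gH, b be integers with a ≥ 4, n = a^2 − 3*k^2, n ≥ 1, 2*gH = n + 2 + 3*a − 3*k, 2*b = n*(n − 5) − 10*(gH − 1), and b ≥ 0. Then n ≥ 16. -/
theorem stmt_10 (a k n gH b : ℤ)
    (ha : a ≥ 4) (hn : n = a ^ 2 - 3 * k ^ 2) (hn1 : n ≥ 1)
    (hgH : 2 * gH = n + 2 + 3 * a - 3 * k)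
    (hb : 2 * b = n * (n - 5) - 10 * (gH - 1))
    (hb0 : b ≥ 0) :
    n ≥ 16 := by
  by_contra hcon
  push_neg at hcon
  have hcon' : n ≤ 15 := by omega
  obtain ⟨d, hdd⟩ : ∃ d, a - k = d := ⟨_, rfl⟩
  obtain ⟨s, hss⟩ : ∃ s, a - 3 * k = s := ⟨_, rfl⟩
  have key : 2 * b = n * n - 10 * n - 15 * d := by
    rw [← hdd]; linear_combination hb - 5 * hgH
  have hs : s * s = 3 * (d * d) - 2 * n := by
    rw [← hdd, ← hss]; linear_combination 2 * hn
  have hsa : 3 * d - s ≥ 8 := by omega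
  have hd5 : d ≤ 5 := by
    nlinarith [key, hb0, mul_nonneg (by linarith : (0:ℤ) ≤ 15 - n) (by linarith : (0:ℤ) ≤ n + 5)]
  have hd1 : 1 ≤ d := by
    by_contra hd
    push_neg at hd
    have h1 : s ≤ 3 * d - 8 := by omega
    nlinarith [hs, hn1, mul_nonneg (by linarith : (0:ℤ) ≤ 3*d - 8 - s) (by linarith : (0:ℤ) ≤ -(s + 3*d - 8)), sq_nonneg d]
  have hsu : s ≤ 7 := by omega
  have hsl : -9 ≤ s := by
    nlinarith [hs, hn1, sq_nonneg (s + 10), mul_nonneg (by linarith : (0:ℤ) ≤ 5 - d) (by linarith : (0:ℤ) ≤ d - 1)]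
  have hn12 : 12 ≤ n := by
    by_contra hn'
    push_neg at hn'
    nlinarith [key, hb0, hd1, mul_nonneg (by linarith : (0:ℤ) ≤ 11 - n) (by linarith : (0:ℤ) ≤ n + 1)]
  interval_cases n <;> interval_cases d <;> interval_cases s <;> omega
end

section
/- Let g, a, k, n, gH, b be integers with g ≥ 5, a ≥ 5, n = a^2 − g*k^2, n ≥ 1, 2*gH = n + 2 + (2*g − 3)*a − g*k, 2*b = n*(n − 5) − 10*(gH − 1) − 2*(g − 1)*(g − 3), and b ≥ 0. Then n > 5 and (n − 5)^2 > 2*g*(g + 11). -/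
theorem stmt_12 (g a k n gH b : ℤ)
    (hg : g ≥ 5) (ha : a ≥ 5)
    (hn : n = a ^ 2 - g * k ^ 2) (hn1 : n ≥ 1)
    (hgH : 2 * gH = n + 2 + (2 * g - 3) * a - g * k)
    (hb : 2 * b = n * (n - 5) - 10 * (gH - 1) - 2 * (g - 1) * (g - 3))
    (hb0 : b ≥ 0) :
    n > 5 ∧ (n - 5) ^ 2 > 2 * g * (g + 11) := by
  have hk : g * k ^ 2 ≤ a ^ 2 - 1 := by linarith [hn1, hn.ge, hn.le]
  have H2 : 10*g*a - 15*a - 5*g*k - 30*g + 31 > 0 := by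
    nlinarith [sq_nonneg (a - 2*k), sq_nonneg (a - k), sq_nonneg (a + 2*k),
      mul_nonneg (by linarith : (0:ℤ) ≤ g - 5) (by linarith : (0:ℤ) ≤ a - 5),
      mul_nonneg (mul_nonneg (by linarith : (0:ℤ) ≤ g - 5) (by linarith : (0:ℤ) ≤ a - 5)) (by linarith : (0:ℤ) ≤ a - 5),
      mul_nonneg (by linarith : (0:ℤ) ≤ g - 5) (sq_nonneg (a - 2*k)),
      mul_nonneg (by linarith : (0:ℤ) ≤ a - 5) (sq_nonneg (a - 2*k))]
  have H1 : n*(n-10) ≥ 10*g*a - 15*a - 5*g*k + 2*(g-1)*(g-3) := by nlinarith [hb0, hb, hgH]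
  have hpos : n*(n-10) > 0 := by nlinarith
  have hn10 : n > 10 := by nlinarith
  constructor
  · linarith
  · nlinarith
end

section
/- Let a, k, n, gH, gS be integers with a ≥ 4, n = a^2 − 3*k^2, n ≥ 16, 2*gH = n + 2 + 3*a − 3*k, and 2*gS = n^2 − 7*n + 20 + 2*(n − 12)*gH. Then gS ≥ 130. -/
theorem stmt_13 (a k n gH gS : ℤ)
    (ha : a ≥ 4) (hn : n = a ^ 2 - 3 * k ^ 2) (hn16 : n ≥ 16)
    (hgH : 2 * gH = n + 2 + 3 * a - 3 * k)
    (hgS : 2 * gS = n ^ 2 - 7 * n + 20 + 2 * (n - 12) * gH) :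
    gS ≥ 130 := by
  have hk : k ≤ a - 2 := by
    by_contra h
    push_neg at h
    have hk1 : k ≥ a - 1 := by omega
    have hk3 : k ≥ 3 := by omega
    nlinarith [sq_nonneg (k - (a - 1)), sq_nonneg (a - 4)]
  nlinarith [mul_nonneg (by omega : (0:ℤ) ≤ n - 12) (by omega : (0:ℤ) ≤ a - k - 2),
    sq_nonneg (n - 16), hn16]
end

section
/- There do not exist integers a, k, c, l with a ≥ 5, 2*|k − 1| ≤ a − 3, c ≥ 0, c^2 − 2*l^2 = −1, and (a − 1)*c − 2*(k − 1)*l = 1. -/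
theorem stmt_19 :
    ¬ ∃ a k c l : ℤ,
      a ≥ 5 ∧ 2 * |k - 1| ≤ a - 3 ∧ c ≥ 0 ∧
      c ^ 2 - 2 * l ^ 2 = -1 ∧ (a - 1) * c - 2 * (k - 1) * l = 1 := by
  rintro ⟨a, k, c, l, ha, hk, hc, h1, h2⟩
  have hc1 : 1 ≤ c := by
    rcases eq_or_lt_of_le hc with h | h
    · exfalso
      rw [← h] at h1
      rcases eq_or_ne l 0 with rfl | hl0
      · norm_num at h1
      · have h3 : 1 ≤ |l| := Int.one_le_abs hl0
        nlinarith [sq_abs l]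
    · omega
  have hl : |l| ≤ c := by
    rw [abs_le]
    constructor <;> nlinarith
  have h4 : (k - 1) * l ≤ |k - 1| * |l| := by
    rw [← abs_mul]; exact le_abs_self _
  have h5 : |k - 1| * |l| ≤ |k - 1| * c :=
    mul_le_mul_of_nonneg_left hl (abs_nonneg _)
  nlinarith [mul_le_mul_of_nonneg_right hk hc]
end
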